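/- arXiv:2511.07131 — 5 statements merged into one kernel-verified Lean document; each statement's English description precedes it below -/
import Mathlib

section
/- Let $f \in \mathbb{Q}[x]$, $u \in \mathbb{Q}$ with $f(u) \neq 0$, and let $m_1, m_2, m_3 \geq 3$ be odd integers with $M = \mathrm{lcm}(m_1, m_2, m_3)$ and $M_i = M/m_i$. Suppose $p, q, r \in \mathbb{Q}$ satisfy $v_1^{2m_1}(p^2 - a) = v_2^{2m_2}(q^2 - b) = v_3^{2m_3}(r^2 - c)$ with $r^2 - c \neq 0$ and $v_1 v_2 v_3 \neq 0$. Set $T = \frac{f(u)}{v_3^{2m_3}(r^2 - c)}$, and define $x_1 = \frac{1}{v_1^2 T^{M_1}}$, $x_2 = \frac{1}{v_2^2 T^{M_2}}$, $x_3 = \frac{1}{v_3^2 T^{M_3}}$, $x_4 = u$, $y_1 = p$, $y_2 = q$, $y_3 = r$, $y_4 = T^{-(M-1)/2}$. Then $\frac{y_1^2 - a}{x_1^{m_1}} = \frac{y_2^2 - b}{x_2^{m_2}} = \frac{y_3^2 - c}{x_3^{m_3}} = \frac{f(x_4)}{y_4^2}$. -/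
theorem parametric_solution_system_one (f : Polynomial ℚ) (u : ℚ) (hfu : f.eval u ≠ 0)
    (a b c : ℚ) (ha : a ≠ 0) (hb : b ≠ 0) (hc : c ≠ 0)
    (m1 m2 m3 : ℕ) (hm1 : 3 ≤ m1) (hm2 : 3 ≤ m2) (hm3 : 3 ≤ m3)
    (ho1 : Odd m1) (ho2 : Odd m2) (ho3 : Odd m3)
    (p q r v1 v2 v3 : ℚ) (hv1 : v1 ≠ 0) (hv2 : v2 ≠ 0) (hv3 : v3 ≠ 0)
    (hrc : r ^ 2 - c ≠ 0)
    (h1 : v1 ^ (2 * m1) * (p ^ 2 - a) = v2 ^ (2 * m2) * (q ^ 2 - b))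
    (h2 : v2 ^ (2 * m2) * (q ^ 2 - b) = v3 ^ (2 * m3) * (r ^ 2 - c)) :
    let M := Nat.lcm m1 (Nat.lcm m2 m3)
    let M1 := M / m1
    let M2 := M / m2
    let M3 := M / m3
    let T := f.eval u / (v3 ^ (2 * m3) * (r ^ 2 - c))
    let x1 := 1 / (v1 ^ 2 * T ^ M1)
    let x2 := 1 / (v2 ^ 2 * T ^ M2)
    let x3 := 1 / (v3 ^ 2 * T ^ M3)
    let x4 := u
    let y1 := p
    let y2 := q
    let y3 := r
    let y4 := (T ^ ((M - 1) / 2))⁻¹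
    ((y1 ^ 2 - a) / x1 ^ m1 = (y2 ^ 2 - b) / x2 ^ m2) ∧
    ((y2 ^ 2 - b) / x2 ^ m2 = (y3 ^ 2 - c) / x3 ^ m3) ∧
    ((y3 ^ 2 - c) / x3 ^ m3 = f.eval x4 / y4 ^ 2) := by
  intro M M1 M2 M3 T x1 x2 x3 x4 y1 y2 y3 y4
  have hS : v3 ^ (2 * m3) * (r ^ 2 - c) ≠ 0 := mul_ne_zero (pow_ne_zero _ hv3) hrc
  have hT : T ≠ 0 := div_ne_zero hfu hS
  have hd1 : m1 ∣ M := Nat.dvd_lcm_left _ _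
  have hd2 : m2 ∣ M := dvd_trans (Nat.dvd_lcm_left _ _) (Nat.dvd_lcm_right _ _)
  have hd3 : m3 ∣ M := dvd_trans (Nat.dvd_lcm_right _ _) (Nat.dvd_lcm_right _ _)
  have e1 : M1 * m1 = M := Nat.div_mul_cancel hd1
  have e2 : M2 * m2 = M := Nat.div_mul_cancel hd2
  have e3 : M3 * m3 = M := Nat.div_mul_cancel hd3
  have hMpos : 0 < M := Nat.pos_of_ne_zero (by
    have := Nat.lcm_ne_zero (Nat.lcm_ne_zero (by omega : m2 ≠ 0) (by omega : m3 ≠ 0))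
      (by omega : m1 ≠ 0)
    intro h
    exact Nat.lcm_ne_zero (by omega : m1 ≠ 0)
      (Nat.lcm_ne_zero (by omega : m2 ≠ 0) (by omega : m3 ≠ 0)) h)
  have hModd : Odd M := by
    have hdvd : M ∣ m1 * (m2 * m3) :=
      Nat.lcm_dvd (Dvd.intro _ rfl) (Nat.lcm_dvd ⟨m1 * m3, by ring⟩ ⟨m1 * m2, by ring⟩)
    have hodd : Odd (m1 * (m2 * m3)) := ho1.mul (ho2.mul ho3)
    rw [Nat.odd_iff] at hodd ⊢
    rcases Nat.mod_two_eq_zero_or_one M with h | h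
    · exfalso
      have : 2 ∣ M := Nat.dvd_of_mod_eq_zero h
      have : 2 ∣ m1 * (m2 * m3) := this.trans hdvd
      omega
    · exact h
  have hhalf : 2 * ((M - 1) / 2) = M - 1 := by
    rw [Nat.odd_iff] at hModd; omega
  have hx : ∀ (v : ℚ) (Mi mi : ℕ), Mi * mi = M →
      (1 / (v ^ 2 * T ^ Mi)) ^ mi = 1 / (v ^ (2 * mi) * T ^ M) := by
    intro v Mi mi h
    rw [div_pow, one_pow, mul_pow, ← pow_mul, ← pow_mul, h]
  have hx1 : x1 ^ m1 = 1 / (v1 ^ (2 * m1) * T ^ M) := hx v1 M1 m1 e1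
  have hx2 : x2 ^ m2 = 1 / (v2 ^ (2 * m2) * T ^ M) := hx v2 M2 m2 e2
  have hx3 : x3 ^ m3 = 1 / (v3 ^ (2 * m3) * T ^ M) := hx v3 M3 m3 e3
  have hy4 : y4 ^ 2 = 1 / T ^ (M - 1) := by
    show ((T ^ ((M - 1) / 2))⁻¹) ^ 2 = _
    rw [inv_pow, ← pow_mul, mul_comm ((M-1)/2) 2, hhalf, one_div]
  have hfeq : f.eval u = T * (v3 ^ (2 * m3) * (r ^ 2 - c)) := by
    exact (div_mul_cancel₀ _ hS).symm
  refine ⟨?_, ?_, ?_⟩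
  · rw [hx1, hx2, one_div, one_div, div_eq_mul_inv, inv_inv, div_eq_mul_inv, inv_inv]
    show (p ^ 2 - a) * _ = (q ^ 2 - b) * _
    linear_combination T ^ M * h1
  · rw [hx2, hx3, one_div, one_div, div_eq_mul_inv, inv_inv, div_eq_mul_inv, inv_inv]
    show (q ^ 2 - b) * _ = (r ^ 2 - c) * _
    linear_combination T ^ M * h2
  · rw [hx3, hy4, one_div, one_div, div_eq_mul_inv, inv_inv, div_eq_mul_inv, inv_inv]
    show (r ^ 2 - c) * _ = f.eval u * _
    rw [hfeq]
    have hM : T ^ M = T * T ^ (M - 1) := by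
      rw [← pow_succ']
      congr 1
      omega
    rw [hM]
    ring
end

section
/- Let $f \in \mathbb{Q}[x]$, $u \in \mathbb{Q}$, and let $m_1, m_2, m_3 \geq 3$ be odd integers with $M = \mathrm{lcm}(m_1, m_2, m_3)$ and $M_i = M/m_i$. Suppose $p, q, r \in \mathbb{Q}$ and nonzero $v_1, v_2, v_3 \in \mathbb{Q}$ satisfy $\frac{p^2 - a f(u)}{v_1^{2m_1}} = \frac{q^2 - b f(u)}{v_2^{2m_2}} = \frac{r^2 - c f(u)}{v_3^{2m_3}} =: T \neq 0$. Define $x_i = v_i^2 T^{M_i}$ for $i = 1,2,3$, $x_4 = u$, $y_i = (p,q,r)_i \cdot T^{(M-1)/2}$ for $i=1,2,3$, and $y_4 = T^{-(M-1)/2}$. Then $\frac{y_1^2 - x_1^{m_1}}{a} = \frac{y_2^2 - x_2^{m_2}}{b} = \frac{y_3^2 - x_3^{m_3}}{c} = \frac{f(x_4)}{y_4^2}$. -/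
/-!
Each equation is the same rescaling of a single curve: with `T^M = T^(2k+1)`, multiplying
`p^2 - a f(u) = v^(2m) T` by `T^(2k)` gives `(p T^k)^2 - (v^2 T^(M/m))^m = a f(u) T^(2k)`,
because `m ∣ M`. The common value `f(u) T^(2k)` is also `f(u) / (T^(-k))^2`.
-/

theorem Nat.odd_lcm {m n : ℕ} (hm : Odd m) (hn : Odd n) : Odd (Nat.lcm m n) :=
  (hm.mul hn).of_dvd_nat (Nat.lcm_dvd_mul m n)

theorem div_eq_of_rescaled_curve {K : Type*} [Field K] {a v p F T : K} {m N k : ℕ}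
    (ha : a ≠ 0) (hv : v ≠ 0) (hNm : N * m = 2 * k + 1)
    (h : (p ^ 2 - a * F) / v ^ (2 * m) = T) :
    ((p * T ^ k) ^ 2 - (v ^ 2 * T ^ N) ^ m) / a = F * T ^ (2 * k) := by
  rw [div_eq_iff (pow_ne_zero _ hv)] at h
  rw [div_eq_iff ha, mul_pow, mul_pow, ← pow_mul, ← pow_mul, ← pow_mul, hNm, mul_comm k]
  linear_combination T ^ (2 * k) * h

theorem parametric_solution_system_two_general (f : Polynomial ℚ) (u : ℚ)
    (a b c : ℚ) (ha : a ≠ 0) (hb : b ≠ 0) (hc : c ≠ 0)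
    (m1 m2 m3 : ℕ)
    (ho1 : Odd m1) (ho2 : Odd m2) (ho3 : Odd m3)
    (p q r v1 v2 v3 T : ℚ) (hv1 : v1 ≠ 0) (hv2 : v2 ≠ 0) (hv3 : v3 ≠ 0)
    (h1 : (p ^ 2 - a * f.eval u) / v1 ^ (2 * m1) = T)
    (h2 : (q ^ 2 - b * f.eval u) / v2 ^ (2 * m2) = T)
    (h3 : (r ^ 2 - c * f.eval u) / v3 ^ (2 * m3) = T) :
    let M := Nat.lcm m1 (Nat.lcm m2 m3)
    let M1 := M / m1
    let M2 := M / m2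
    let M3 := M / m3
    let x1 := v1 ^ 2 * T ^ M1
    let x2 := v2 ^ 2 * T ^ M2
    let x3 := v3 ^ 2 * T ^ M3
    let x4 := u
    let y1 := p * T ^ ((M - 1) / 2)
    let y2 := q * T ^ ((M - 1) / 2)
    let y3 := r * T ^ ((M - 1) / 2)
    let y4 := (T ^ ((M - 1) / 2))⁻¹
    ((y1 ^ 2 - x1 ^ m1) / a = (y2 ^ 2 - x2 ^ m2) / b) ∧
    ((y2 ^ 2 - x2 ^ m2) / b = (y3 ^ 2 - x3 ^ m3) / c) ∧
    ((y3 ^ 2 - x3 ^ m3) / c = f.eval x4 / y4 ^ 2) := by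
  intro M M1 M2 M3 x1 x2 x3 x4 y1 y2 y3 y4
  have hM : M = 2 * ((M - 1) / 2) + 1 := by
    have := Nat.odd_iff.mp (Nat.odd_lcm ho1 (Nat.odd_lcm ho2 ho3))
    omega
  have hd1 : m1 ∣ M := Nat.dvd_lcm_left _ _
  have hd2 : m2 ∣ M := (Nat.dvd_lcm_left _ _).trans (Nat.dvd_lcm_right _ _)
  have hd3 : m3 ∣ M := (Nat.dvd_lcm_right _ _).trans (Nat.dvd_lcm_right _ _)
  have E1 := div_eq_of_rescaled_curve ha hv1 ((Nat.div_mul_cancel hd1).trans hM) h1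
  have E2 := div_eq_of_rescaled_curve hb hv2 ((Nat.div_mul_cancel hd2).trans hM) h2
  have E3 := div_eq_of_rescaled_curve hc hv3 ((Nat.div_mul_cancel hd3).trans hM) h3
  have E4 : f.eval x4 / y4 ^ 2 = f.eval u * T ^ (2 * ((M - 1) / 2)) := by
    rw [inv_pow, ← pow_mul, mul_comm, div_inv_eq_mul]
  exact ⟨E1.trans E2.symm, E2.trans E3.symm, E3.trans E4.symm⟩

theorem parametric_solution_system_two (f : Polynomial ℚ) (u : ℚ)
    (a b c : ℚ) (ha : a ≠ 0) (hb : b ≠ 0) (hc : c ≠ 0)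
    (m1 m2 m3 : ℕ) (hm1 : 3 ≤ m1) (hm2 : 3 ≤ m2) (hm3 : 3 ≤ m3)
    (ho1 : Odd m1) (ho2 : Odd m2) (ho3 : Odd m3)
    (p q r v1 v2 v3 T : ℚ) (hv1 : v1 ≠ 0) (hv2 : v2 ≠ 0) (hv3 : v3 ≠ 0)
    (hT : T ≠ 0)
    (h1 : (p ^ 2 - a * f.eval u) / v1 ^ (2 * m1) = T)
    (h2 : (q ^ 2 - b * f.eval u) / v2 ^ (2 * m2) = T)
    (h3 : (r ^ 2 - c * f.eval u) / v3 ^ (2 * m3) = T) :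
    let M := Nat.lcm m1 (Nat.lcm m2 m3)
    let M1 := M / m1
    let M2 := M / m2
    let M3 := M / m3
    let x1 := v1 ^ 2 * T ^ M1
    let x2 := v2 ^ 2 * T ^ M2
    let x3 := v3 ^ 2 * T ^ M3
    let x4 := u
    let y1 := p * T ^ ((M - 1) / 2)
    let y2 := q * T ^ ((M - 1) / 2)
    let y3 := r * T ^ ((M - 1) / 2)
    let y4 := (T ^ ((M - 1) / 2))⁻¹
    ((y1 ^ 2 - x1 ^ m1) / a = (y2 ^ 2 - x2 ^ m2) / b) ∧
    ((y2 ^ 2 - x2 ^ m2) / b = (y3 ^ 2 - x3 ^ m3) / c) ∧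
    ((y3 ^ 2 - x3 ^ m3) / c = f.eval x4 / y4 ^ 2) :=
  parametric_solution_system_two_general f u a b c ha hb hc m1 m2 m3 ho1 ho2 ho3 p q r v1 v2 v3 T
    hv1 hv2 hv3 h1 h2 h3
end

section
/- Let $a, b, c$ be nonzero rationals, $v_1, v_2, v_3$ nonzero rationals, $m_1, m_2, m_3$ positive integers, and $y_u$ a nonzero rational. Define $w_1 = \frac{(a^2 b^2 v_3^{2m_3} + a^2 c^2 v_2^{2m_2} - b^2 c^2 v_1^{2m_1})\, y_u}{2 a b c\, v_2^{m_2} v_3^{m_3}}$, $w_2 = \frac{(a^2 b^2 v_3^{2m_3} - a^2 c^2 v_2^{2m_2} + b^2 c^2 v_1^{2m_1})\, y_u}{2 a b c\, v_1^{m_1} v_3^{m_3}}$, $w_3 = \frac{(-a^2 b^2 v_3^{2m_3} + a^2 c^2 v_2^{2m_2} + b^2 c^2 v_1^{2m_1})\, y_u}{2 a b c\, v_1^{m_1} v_2^{m_2}}$, and let $F = y_u^2$. Then $v_2^{2m_2} v_3^{2m_3}(w_1^2 - a^2 F) = v_1^{2m_1} v_3^{2m_3}(w_2^2 - b^2 F)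 = v_1^{2m_1} v_2^{2m_2}(w_3^2 - c^2 F)$. -/
/-! Put `A = a²b²v₃^{2m₃}`, `B = a²c²v₂^{2m₂}`, `C = b²c²v₁^{2m₁}`. Clearing denominators,
`v₂^{2m₂} v₃^{2m₃} (w₁² - a² y_u²) = y_u² ((A + B - C)² - 4AB) / (2abc)²`, and similarly for the other
two coordinates with the roles of `A, B, C` permuted. Since `(A + B - C)² - 4AB` is the symmetric
form `A² + B² + C² - 2AB - 2BC - 2CA`, the three expressions coincide. -/

/-- The symmetric quadratic form behind Heron's formula: `heronForm A B C = -16 S²` for a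
triangle of area `S` with squared side lengths `A, B, C`. -/
def heronForm {R : Type*} [CommRing R] (A B C : R) : R :=
  A ^ 2 + B ^ 2 + C ^ 2 - 2 * (A * B + B * C + C * A)

theorem sq_add_sub_sub_four_mul {R : Type*} [CommRing R] (A B C : R) :
    (A + B - C) ^ 2 - 4 * A * B = heronForm A B C := by
  unfold heronForm
  ring

theorem mul_sq_sub_sq_eq_heronForm {K : Type*} [Field K] [NeZero (2 : K)] {a b c u v : K}
    (ha : a ≠ 0) (hb : b ≠ 0) (hc : c ≠ 0) (hu : u ≠ 0) (hv : v ≠ 0) (C y : K) :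
    u ^ 2 * v ^ 2 * (((a ^ 2 * b ^ 2 * v ^ 2 + a ^ 2 * c ^ 2 * u ^ 2 - C) * y
        / (2 * a * b * c * u * v)) ^ 2 - a ^ 2 * y ^ 2)
      = y ^ 2 * heronForm (a ^ 2 * b ^ 2 * v ^ 2) (a ^ 2 * c ^ 2 * u ^ 2) C / (2 * a * b * c) ^ 2 := by
  rw [← sq_add_sub_sub_four_mul]
  field_simp
  ring

theorem doubled_point_on_H_curve_general (a b c v1 v2 v3 yu : ℚ)
    (ha : a ≠ 0) (hb : b ≠ 0) (hc : c ≠ 0)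
    (hv1 : v1 ≠ 0) (hv2 : v2 ≠ 0) (hv3 : v3 ≠ 0)
    (m1 m2 m3 : ℕ) :
    let F := yu ^ 2
    let w1 := (a ^ 2 * b ^ 2 * v3 ^ (2 * m3) + a ^ 2 * c ^ 2 * v2 ^ (2 * m2)
        - b ^ 2 * c ^ 2 * v1 ^ (2 * m1)) * yu / (2 * a * b * c * v2 ^ m2 * v3 ^ m3)
    let w2 := (a ^ 2 * b ^ 2 * v3 ^ (2 * m3) - a ^ 2 * c ^ 2 * v2 ^ (2 * m2)
        + b ^ 2 * c ^ 2 * v1 ^ (2 * m1)) * yu / (2 * a * b * c * v1 ^ m1 * v3 ^ m3)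
    let w3 := (-(a ^ 2 * b ^ 2 * v3 ^ (2 * m3)) + a ^ 2 * c ^ 2 * v2 ^ (2 * m2)
        + b ^ 2 * c ^ 2 * v1 ^ (2 * m1)) * yu / (2 * a * b * c * v1 ^ m1 * v2 ^ m2)
    v2 ^ (2 * m2) * v3 ^ (2 * m3) * (w1 ^ 2 - a ^ 2 * F)
      = v1 ^ (2 * m1) * v3 ^ (2 * m3) * (w2 ^ 2 - b ^ 2 * F) ∧
    v1 ^ (2 * m1) * v3 ^ (2 * m3) * (w2 ^ 2 - b ^ 2 * F)
      = v1 ^ (2 * m1) * v2 ^ (2 * m2) * (w3 ^ 2 - c ^ 2 * F) := by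
  intro F w1 w2 w3
  have h1 := mul_sq_sub_sq_eq_heronForm ha hb hc (pow_ne_zero m2 hv2) (pow_ne_zero m3 hv3)
    (b ^ 2 * c ^ 2 * v1 ^ (2 * m1)) yu
  have h2 := mul_sq_sub_sq_eq_heronForm hb ha hc (pow_ne_zero m1 hv1) (pow_ne_zero m3 hv3)
    (a ^ 2 * c ^ 2 * v2 ^ (2 * m2)) yu
  have h3 := mul_sq_sub_sq_eq_heronForm hc ha hb (pow_ne_zero m1 hv1) (pow_ne_zero m2 hv2)
    (a ^ 2 * b ^ 2 * v3 ^ (2 * m3)) yu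
  simp only [heronForm] at h1 h2 h3
  exact ⟨by linear_combination h1 - h2, by linear_combination h2 - h3⟩

theorem doubled_point_on_H_curve (a b c v1 v2 v3 yu : ℚ)
    (ha : a ≠ 0) (hb : b ≠ 0) (hc : c ≠ 0)
    (hv1 : v1 ≠ 0) (hv2 : v2 ≠ 0) (hv3 : v3 ≠ 0) (hyu : yu ≠ 0)
    (m1 m2 m3 : ℕ) (hm1 : 0 < m1) (hm2 : 0 < m2) (hm3 : 0 < m3) :
    let F := yu ^ 2
    let w1 := (a ^ 2 * b ^ 2 * v3 ^ (2 * m3) + a ^ 2 * c ^ 2 * v2 ^ (2 * m2)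
        - b ^ 2 * c ^ 2 * v1 ^ (2 * m1)) * yu / (2 * a * b * c * v2 ^ m2 * v3 ^ m3)
    let w2 := (a ^ 2 * b ^ 2 * v3 ^ (2 * m3) - a ^ 2 * c ^ 2 * v2 ^ (2 * m2)
        + b ^ 2 * c ^ 2 * v1 ^ (2 * m1)) * yu / (2 * a * b * c * v1 ^ m1 * v3 ^ m3)
    let w3 := (-(a ^ 2 * b ^ 2 * v3 ^ (2 * m3)) + a ^ 2 * c ^ 2 * v2 ^ (2 * m2)
        + b ^ 2 * c ^ 2 * v1 ^ (2 * m1)) * yu / (2 * a * b * c * v1 ^ m1 * v2 ^ m2)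
    v2 ^ (2 * m2) * v3 ^ (2 * m3) * (w1 ^ 2 - a ^ 2 * F)
      = v1 ^ (2 * m1) * v3 ^ (2 * m3) * (w2 ^ 2 - b ^ 2 * F) ∧
    v1 ^ (2 * m1) * v3 ^ (2 * m3) * (w2 ^ 2 - b ^ 2 * F)
      = v1 ^ (2 * m1) * v2 ^ (2 * m2) * (w3 ^ 2 - c ^ 2 * F) :=
  doubled_point_on_H_curve_general a b c v1 v2 v3 yu ha hb hc hv1 hv2 hv3 m1 m2 m3
end

section
/- Let $u, v_1, v_2, v_3$ be nonzero rationals with $f(u) := u^5 + u + 1 \neq 0$, and let $w_1, w_2, w_3$ be as in the preceding example. Assume $w_3^2 \neq 9$ and $w_1^2 \neq 1$. Set $T = \frac{f(u)}{v_3^{26}(w_3^2 - 9)}$ (well-defined and nonzero) and $D = (w_1^2 - 1)\, v_1^{10}\, T^{585}$. Then: (i) the point $\left(u,\ T^{-292}\right)$ lies on the curve $D y^2 = x^5 + x + 1$; and (ii) for $i = 1, 2, 3$, the point $\left(\frac{1}{v_i^2 T^{M_i}},\ w_i\right)$ lies on the curve $y^2 = D x^{4i+1} + i^2$, where $(M_1,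 M_2, M_3) = (117, 65, 45)$. -/
theorem explicit_example_twists (u v1 v2 v3 : ℚ)
    (hu : u ≠ 0) (hv1 : v1 ≠ 0) (hv2 : v2 ≠ 0) (hv3 : v3 ≠ 0)
    (hf : u ^ 5 + u + 1 ≠ 0) :
    let w1 := 3 * v3 ^ 13 / (4 * v2 ^ 9)
        + v2 ^ 9 * (1 / (3 * v3 ^ 13) - 3 * v3 ^ 13 / v1 ^ 10)
    let w2 := 3 * v3 ^ 13 / v1 ^ 5
        + v1 ^ 5 * (1 / (3 * v3 ^ 13) - 3 * v3 ^ 13 / (4 * v2 ^ 18))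
    let w3 := 3 * v2 ^ 9 / v1 ^ 5
        + v1 ^ 5 * (3 / (4 * v2 ^ 9) - v2 ^ 9 / (3 * v3 ^ 26))
    w3 ^ 2 ≠ 9 → w1 ^ 2 ≠ 1 →
    let T := (u ^ 5 + u + 1) / (v3 ^ 26 * (w3 ^ 2 - 9))
    let D := (w1 ^ 2 - 1) * v1 ^ 10 * T ^ 585
    (D * ((T ^ 292)⁻¹) ^ 2 = u ^ 5 + u + 1) ∧
    (w1 ^ 2 = D * (1 / (v1 ^ 2 * T ^ 117)) ^ 5 + 1) ∧
    (w2 ^ 2 = D * (1 / (v2 ^ 2 * T ^ 65)) ^ 9 + 4) ∧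
    (w3 ^ 2 = D * (1 / (v3 ^ 2 * T ^ 45)) ^ 13 + 9) := by
  intro w1 w2 w3 hw3 hw1 T D
  have hw3' : w3 ^ 2 - 9 ≠ 0 := sub_ne_zero.mpr hw3
  have hw1' : w1 ^ 2 - 1 ≠ 0 := sub_ne_zero.mpr hw1
  have hden : v3 ^ 26 * (w3 ^ 2 - 9) ≠ 0 :=
    mul_ne_zero (pow_ne_zero _ hv3) hw3'
  have hT : T ≠ 0 := div_ne_zero hf hden
  -- key polynomial identities
  have key1 : (w1 ^ 2 - 1) * v1 ^ 10 = v3 ^ 26 * (w3 ^ 2 - 9) := by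
    show ((3 * v3 ^ 13 / (4 * v2 ^ 9)
        + v2 ^ 9 * (1 / (3 * v3 ^ 13) - 3 * v3 ^ 13 / v1 ^ 10)) ^ 2 - 1) * v1 ^ 10
      = v3 ^ 26 * ((3 * v2 ^ 9 / v1 ^ 5
        + v1 ^ 5 * (3 / (4 * v2 ^ 9) - v2 ^ 9 / (3 * v3 ^ 26))) ^ 2 - 9)
    field_simp
    ring
  have key2 : (w2 ^ 2 - 4) * v2 ^ 18 = v3 ^ 26 * (w3 ^ 2 - 9) := by
    show ((3 * v3 ^ 13 / v1 ^ 5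
        + v1 ^ 5 * (1 / (3 * v3 ^ 13) - 3 * v3 ^ 13 / (4 * v2 ^ 18))) ^ 2 - 4) * v2 ^ 18
      = v3 ^ 26 * ((3 * v2 ^ 9 / v1 ^ 5
        + v1 ^ 5 * (3 / (4 * v2 ^ 9) - v2 ^ 9 / (3 * v3 ^ 26))) ^ 2 - 9)
    field_simp
    ring
  have hTrel : v3 ^ 26 * (w3 ^ 2 - 9) * T = u ^ 5 + u + 1 := by
    show v3 ^ 26 * (w3 ^ 2 - 9) * ((u ^ 5 + u + 1) / (v3 ^ 26 * (w3 ^ 2 - 9)))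
      = u ^ 5 + u + 1
    exact mul_div_cancel₀ _ hden
  have hDdef : D = (w1 ^ 2 - 1) * v1 ^ 10 * T ^ 585 := rfl
  clear_value w1 w2 w3 T D
  clear hw3 hw1
  refine ⟨?_, ?_, ?_, ?_⟩
  · rw [hDdef, key1, ← hTrel]
    field_simp
  · rw [hDdef]
    field_simp
    ring
  · rw [hDdef, key1, ← key2]
    field_simp
    ring
  · rw [hDdef, key1]
    field_simp
    ring
end

section
/- Let $f \in \mathbb{Q}[x]$ be a polynomial, $m \geq 3$ odd, and $a, v_1, v_2, v_3, u, y_u$ rationals with $y_u^2 = f(u)$, $y_u \neq 0$, $v_1 v_2 v_3 \neq 0$, and suppose $w_1, w_2, w_3 \in \mathbb{Q}$ satisfy $v_2^{2m} v_3^{2m}(w_1^2 - a^2 y_u^2) = v_1^{2m} v_3^{2m}(w_2^2 - a^2 y_u^2) = v_1^{2m} v_2^{2m}(w_3^2 - a^2 y_u^2) =: N \neq 0$. Set $T = \frac{w_1^2 - a^2 f(u)}{v_1^{2m}}$ and $D := a^{-1}\left(w_1^2 T^{m-1} - v_1^{2m} T^m\right)$ (which is independent of $i \in \{1,2,3\}$,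 i.e. $D = a^{-1}(w_i^2 T^{m-1} - v_i^{2m} T^m)$ for each $i$). Then for each $i = 1, 2, 3$ the point $\left(v_i^2 T,\ w_i T^{(m-1)/2}\right)$ lies on the curve $y^2 = x^m + a D$. -/
theorem three_points_on_single_twist (f : Polynomial ℚ)
    (m : ℕ) (hm : 3 ≤ m) (hodd : Odd m)
    (a v1 v2 v3 u yu : ℚ) (hyu2 : yu ^ 2 = f.eval u) (hyu : yu ≠ 0)
    (hv1 : v1 ≠ 0) (hv2 : v2 ≠ 0) (hv3 : v3 ≠ 0)
    (w1 w2 w3 N : ℚ) (hN : N ≠ 0)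
    (h1 : v2 ^ (2 * m) * v3 ^ (2 * m) * (w1 ^ 2 - a ^ 2 * yu ^ 2) = N)
    (h2 : v1 ^ (2 * m) * v3 ^ (2 * m) * (w2 ^ 2 - a ^ 2 * yu ^ 2) = N)
    (h3 : v1 ^ (2 * m) * v2 ^ (2 * m) * (w3 ^ 2 - a ^ 2 * yu ^ 2) = N) :
    let T := (w1 ^ 2 - a ^ 2 * f.eval u) / v1 ^ (2 * m)
    let D := a⁻¹ * (w1 ^ 2 * T ^ (m - 1) - v1 ^ (2 * m) * T ^ m)
    (D = a⁻¹ * (w2 ^ 2 * T ^ (m - 1) - v2 ^ (2 * m) * T ^ m)) ∧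
    (D = a⁻¹ * (w3 ^ 2 * T ^ (m - 1) - v3 ^ (2 * m) * T ^ m)) ∧
    ((w1 * T ^ ((m - 1) / 2)) ^ 2 = (v1 ^ 2 * T) ^ m + a * D) ∧
    ((w2 * T ^ ((m - 1) / 2)) ^ 2 = (v2 ^ 2 * T) ^ m + a * D) ∧
    ((w3 * T ^ ((m - 1) / 2)) ^ 2 = (v3 ^ 2 * T) ^ m + a * D) := by
  intro T D
  have hv1' : v1 ^ (2 * m) ≠ 0 := pow_ne_zero _ hv1
  have hv2' : v2 ^ (2 * m) ≠ 0 := pow_ne_zero _ hv2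
  have hv3' : v3 ^ (2 * m) ≠ 0 := pow_ne_zero _ hv3
  have hT1 : v1 ^ (2 * m) * T = w1 ^ 2 - a ^ 2 * yu ^ 2 := by
    show v1 ^ (2 * m) * ((w1 ^ 2 - a ^ 2 * f.eval u) / v1 ^ (2 * m)) = _
    rw [← hyu2]
    field_simp
  have hD : D = a⁻¹ * (w1 ^ 2 * T ^ (m - 1) - v1 ^ (2 * m) * T ^ m) := rfl
  clear_value T D
  have e12 : v2 ^ (2 * m) * (w1 ^ 2 - a ^ 2 * yu ^ 2)
      = v1 ^ (2 * m) * (w2 ^ 2 - a ^ 2 * yu ^ 2) := by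
    apply mul_left_cancel₀ hv3'
    linear_combination h1 - h2
  have e13 : v3 ^ (2 * m) * (w1 ^ 2 - a ^ 2 * yu ^ 2)
      = v1 ^ (2 * m) * (w3 ^ 2 - a ^ 2 * yu ^ 2) := by
    apply mul_left_cancel₀ hv2'
    linear_combination h1 - h3
  have hT2 : v2 ^ (2 * m) * T = w2 ^ 2 - a ^ 2 * yu ^ 2 := by
    apply mul_left_cancel₀ hv1'
    rw [← e12]
    linear_combination v2 ^ (2 * m) * hT1
  have hT3 : v3 ^ (2 * m) * T = w3 ^ 2 - a ^ 2 * yu ^ 2 := by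
    apply mul_left_cancel₀ hv1'
    rw [← e13]
    linear_combination v3 ^ (2 * m) * hT1
  have hTm : T ^ m = T ^ (m - 1) * T := by
    rw [← pow_succ, Nat.sub_add_cancel (by omega)]
  have haD : a * D = a ^ 2 * yu ^ 2 * T ^ (m - 1) := by
    by_cases ha : a = 0
    · simp [hD, ha]
    · rw [hD, ← mul_assoc, mul_inv_cancel₀ ha, one_mul, hTm]
      linear_combination (-T ^ (m - 1)) * hT1
  have hhalf : (m - 1) / 2 * 2 = m - 1 := by
    obtain ⟨k, hk⟩ := hodd; omega
  have key : ∀ v w : ℚ, v ^ (2 * m) * T = w ^ 2 - a ^ 2 * yu ^ 2 →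
      (w * T ^ ((m - 1) / 2)) ^ 2 = (v ^ 2 * T) ^ m + a * D := by
    intro v w h
    rw [haD, mul_pow, ← pow_mul, hhalf, mul_pow, ← pow_mul, hTm]
    linear_combination (-T ^ (m - 1)) * h
  refine ⟨?_, ?_, key _ _ hT1, key _ _ hT2, key _ _ hT3⟩
  · rw [hD, hTm]
    linear_combination a⁻¹ * T ^ (m - 1) * (hT2 - hT1)
  · rw [hD, hTm]
    linear_combination a⁻¹ * T ^ (m - 1) * (hT3 - hT1)
end
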